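/- The integral ∫_{ℝ⁵} W(x)^{4/3} (ΛW)(x) dx is finite and strictly negative, where ΛW(x) = (3/2)W(x) + x·∇W(x). Consequently, for every ℓ ∈ ℝ⁵ with |ℓ| < 1, the constant κ_ℓ = −(1 − |ℓ|²) (∫_{ℝ⁵} W^{4/3} ΛW)/(∫_{ℝ⁵} (ΛW)²) is strictly positive. -/

import Mathlib

noncomputable section

open Real MeasureTheory Filter Topology

abbrev E5 := EuclideanSpace ℝ (Fin 5)

/-- The ground state `W(x) = (1 + |x|²/15)^{-3/2}` on ℝ⁵. -/
def Wfun (x : E5) : ℝ := (1 + ‖x‖ ^ 2 / 15) ^ (-(3 : ℝ) / 2)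

/-- `ΛW = (3/2)W + x·∇W`. -/
def LamW (x : E5) : ℝ := (3 / 2 : ℝ) * Wfun x + fderiv ℝ Wfun x x

/-- `κ_ℓ = -(1-|ℓ|²)(∫ W^{4/3} ΛW)/(∫ (ΛW)²)`. -/
def kappal (l : E5) : ℝ :=
  -(1 - ‖l‖ ^ 2) * (∫ x : E5, Wfun x ^ ((4 : ℝ) / 3) * LamW x) / (∫ x : E5, (LamW x) ^ 2)

lemma base_pos (s : ℝ) (hs : 0 ≤ s) : (0:ℝ) < 1 + s / 15 := by nlinarith

lemma hasFDerivAt_Wfun (x : E5) :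
    HasFDerivAt Wfun ((-(1/10) * (1 + ‖x‖^2/15) ^ (-(5:ℝ)/2)) • (2 • (innerSL ℝ x))) x := by
  have hpos : (0:ℝ) < 1 + ‖x‖^2/15 := base_pos _ (sq_nonneg _)
  have h1 : HasDerivAt (fun t : ℝ => 1 + t/15) (1/15) (‖x‖^2) := by
    simpa using ((hasDerivAt_id (‖x‖^2)).div_const 15).const_add 1
  have h2 : HasDerivAt (fun u : ℝ => u ^ (-(3:ℝ)/2))
      ((-(3:ℝ)/2) * (1 + ‖x‖^2/15) ^ ((-(3:ℝ)/2) - 1)) (1 + ‖x‖^2/15) :=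
    Real.hasDerivAt_rpow_const (Or.inl hpos.ne')
  have h3 := h2.comp (‖x‖^2) h1
  have h4 : HasFDerivAt (fun y : E5 => ‖y‖^2) (2 • (innerSL ℝ x)) x :=
    (hasStrictFDerivAt_norm_sq x).hasFDerivAt
  have := h3.comp_hasFDerivAt x h4
  refine HasFDerivAt.congr_fderiv this ?_
  congr 1
  rw [show (-(3:ℝ)/2) - 1 = -(5:ℝ)/2 by norm_num]
  ring

lemma LamW_eq (x : E5) :
    LamW x = (3/2 - ‖x‖^2/10) * (1 + ‖x‖^2/15) ^ (-(5:ℝ)/2) := by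
  have hpos : (0:ℝ) < 1 + ‖x‖^2/15 := base_pos _ (sq_nonneg _)
  have hd := (hasFDerivAt_Wfun x).fderiv
  rw [LamW, hd]
  have hW : Wfun x = (1 + ‖x‖^2/15) * (1 + ‖x‖^2/15) ^ (-(5:ℝ)/2) := by
    rw [Wfun, show (-(3:ℝ)/2) = 1 + (-(5:ℝ)/2) by norm_num, Real.rpow_add hpos, Real.rpow_one]
  have happ : ((-(1/10) * (1 + ‖x‖^2/15) ^ (-(5:ℝ)/2)) • (2 • (innerSL ℝ x))) x
      = -(1/10) * (1 + ‖x‖^2/15) ^ (-(5:ℝ)/2) * (2 * ‖x‖^2) := by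
    simp only [ContinuousLinearMap.smul_apply, ContinuousLinearMap.smul_apply, innerSL_apply_apply,
      real_inner_self_eq_norm_sq, smul_eq_mul]
    ring
  rw [happ, hW]
  ring
def f1 (r : ℝ) : ℝ := (3/2 - r^2/10) * (1 + r^2/15) ^ (-(9:ℝ)/2)
def f2 (r : ℝ) : ℝ := (3/2 - r^2/10)^2 * (1 + r^2/15) ^ (-(5:ℝ))

lemma decay_bound (r : ℝ) (hr : 0 ≤ r) :
    (1 + r^2/15) ^ (-(3:ℝ)) ≤ 27000 * (1+r) ^ (-(6:ℝ)) := by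
  have hA : (0:ℝ) < 1 + r^2/15 := base_pos _ (sq_nonneg r)
  have hB : (0:ℝ) < 1 + r := by linarith
  rw [show (-(3:ℝ)) = -((3:ℕ):ℝ) by norm_num, Real.rpow_neg hA.le, Real.rpow_natCast,
    show (-(6:ℝ)) = -((6:ℕ):ℝ) by norm_num, Real.rpow_neg hB.le, Real.rpow_natCast]
  rw [inv_le_iff_one_le_mul₀ (by positivity)]
  rw [show (27000:ℝ) * ((1+r)^6)⁻¹ * (1+r^2/15)^3 = (27000 * (1+r^2/15)^3) / (1+r)^6 by ring,
    le_div_iff₀ (by positivity), one_mul]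
  nlinarith [sq_nonneg (r-1), sq_nonneg r, pow_le_pow_left₀ (by positivity : (0:ℝ) ≤ (1+r)^2)
    (show (1+r)^2 ≤ 30*(1+r^2/15) by nlinarith [sq_nonneg (r-1)]) 3]

lemma f1_bound (r : ℝ) (hr : 0 ≤ r) : |f1 r| ≤ 81000 * (1+r) ^ (-(6:ℝ)) := by
  have hA : (0:ℝ) < 1 + r^2/15 := base_pos _ (sq_nonneg r)
  have h1 : |f1 r| = |3/2 - r^2/10| * (1 + r^2/15) ^ (-(9:ℝ)/2) := by
    rw [f1, abs_mul, abs_of_pos (Real.rpow_pos_of_pos hA _)]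
  have h2 : |3/2 - r^2/10| ≤ 3 * (1 + r^2/15) := by
    rw [abs_le]; constructor <;> nlinarith
  have h3 : (1 + r^2/15) * (1 + r^2/15) ^ (-(9:ℝ)/2) = (1 + r^2/15) ^ (-(7:ℝ)/2) := by
    rw [show (-(7:ℝ)/2) = 1 + (-(9:ℝ)/2) by norm_num, Real.rpow_add hA, Real.rpow_one]
  have h4 : (1 + r^2/15) ^ (-(7:ℝ)/2) ≤ (1 + r^2/15) ^ (-(3:ℝ)) :=
    Real.rpow_le_rpow_of_exponent_le (by nlinarith) (by norm_num)
  calc |f1 r| ≤ 3 * (1 + r^2/15) * (1 + r^2/15) ^ (-(9:ℝ)/2) := by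
        rw [h1]; exact mul_le_mul_of_nonneg_right h2 (Real.rpow_pos_of_pos hA _).le
    _ = 3 * (1 + r^2/15) ^ (-(7:ℝ)/2) := by rw [mul_assoc, h3]
    _ ≤ 3 * (27000 * (1+r) ^ (-(6:ℝ))) := by
        have := (h4.trans (decay_bound r hr)); linarith
    _ = 81000 * (1+r) ^ (-(6:ℝ)) := by ring

lemma f2_bound (r : ℝ) (hr : 0 ≤ r) : |f2 r| ≤ 243000 * (1+r) ^ (-(6:ℝ)) := by
  have hA : (0:ℝ) < 1 + r^2/15 := base_pos _ (sq_nonneg r)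
  have h1 : |f2 r| = (3/2 - r^2/10)^2 * (1 + r^2/15) ^ (-(5:ℝ)) := by
    rw [f2, abs_mul, abs_of_nonneg (sq_nonneg _), abs_of_pos (Real.rpow_pos_of_pos hA _)]
  have h2 : (3/2 - r^2/10)^2 ≤ 9 * (1 + r^2/15)^2 := by nlinarith [sq_nonneg r, sq_nonneg (r^2)]
  have h3 : ((1 + r^2/15):ℝ)^(2:ℕ) * (1 + r^2/15) ^ (-(5:ℝ)) = (1 + r^2/15) ^ (-(3:ℝ)) := by
    rw [← Real.rpow_natCast (1 + r^2/15) 2, ← Real.rpow_add hA]; norm_num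
  calc |f2 r| ≤ 9 * (1 + r^2/15)^2 * (1 + r^2/15) ^ (-(5:ℝ)) := by
        rw [h1]; exact mul_le_mul_of_nonneg_right h2 (Real.rpow_pos_of_pos hA _).le
    _ = 9 * (1 + r^2/15) ^ (-(3:ℝ)) := by rw [mul_assoc, h3]
    _ ≤ 9 * (27000 * (1+r) ^ (-(6:ℝ))) := by
        have := decay_bound r hr; linarith
    _ = 243000 * (1+r) ^ (-(6:ℝ)) := by ring

lemma cont_f1 : Continuous f1 := by
  apply Continuous.mul (by continuity)
  apply Continuous.rpow_const (by continuity)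
  intro r; exact Or.inl (base_pos _ (sq_nonneg r)).ne'

lemma cont_f2 : Continuous f2 := by
  apply Continuous.mul (by continuity)
  apply Continuous.rpow_const (by continuity)
  intro r; exact Or.inl (base_pos _ (sq_nonneg r)).ne'

lemma int1 : Integrable (fun x : E5 => f1 ‖x‖) := by
  have hd : ((Module.finrank ℝ E5 : ℝ)) < 6 := by
    simp [finrank_euclideanSpace]; norm_num
  refine (((integrable_one_add_norm (E := E5) hd)).const_mul 81000).mono'
    (cont_f1.comp continuous_norm).aestronglyMeasurable ?_
  filter_upwards with x
  simpa [norm_norm] using f1_bound ‖x‖ (norm_nonneg x)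

lemma int2 : Integrable (fun x : E5 => f2 ‖x‖) := by
  have hd : ((Module.finrank ℝ E5 : ℝ)) < 6 := by
    simp [finrank_euclideanSpace]; norm_num
  refine (((integrable_one_add_norm (E := E5) hd)).const_mul 243000).mono'
    (cont_f2.comp continuous_norm).aestronglyMeasurable ?_
  filter_upwards with x
  simpa [norm_norm] using f2_bound ‖x‖ (norm_nonneg x)
def Fanti (r : ℝ) : ℝ := r^5 * (1 + r^2/15) ^ (-(7:ℝ)/2) * (3/10 - 3*r^2/350)

lemma hasDerivAt_Fanti (r : ℝ) : HasDerivAt Fanti (r^4 * f1 r) r := by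
  have hA : (0:ℝ) < 1 + r^2/15 := base_pos _ (sq_nonneg r)
  have h1 : HasDerivAt (fun t : ℝ => 1 + t^2/15) (2*r/15) r := by
    simpa using (((hasDerivAt_pow 2 r)).div_const 15).const_add 1
  have h2 : HasDerivAt (fun u : ℝ => u ^ (-(7:ℝ)/2))
      ((-(7:ℝ)/2) * (1 + r^2/15) ^ ((-(7:ℝ)/2) - 1)) (1 + r^2/15) :=
    Real.hasDerivAt_rpow_const (Or.inl hA.ne')
  have h3 := h2.comp r h1
  have h4 : HasDerivAt (fun t : ℝ => t^5) (5*r^4) r := by simpa using hasDerivAt_pow 5 r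
  have h5 : HasDerivAt (fun t : ℝ => 3/10 - 3*t^2/350) (-(3*(2*r)/350)) r := by
    have := (((hasDerivAt_pow 2 r)).const_mul (3:ℝ)).div_const 350
    simpa using ((this.const_sub (3/10)))
  have h6 := (h4.mul h3).mul h5
  refine h6.congr_deriv ?_
  have hexp : (1 + r^2/15) ^ ((-(7:ℝ)/2) - 1) = (1 + r^2/15) ^ (-(9:ℝ)/2) := by
    norm_num
  have hsplit : (1 + r^2/15) ^ (-(7:ℝ)/2) = (1 + r^2/15) * (1 + r^2/15) ^ (-(9:ℝ)/2) := by
    rw [show (-(7:ℝ)/2) = 1 + (-(9:ℝ)/2) by norm_num, Real.rpow_add hA, Real.rpow_one]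
  simp only [Function.comp_apply, Pi.mul_apply] at *
  rw [f1, hexp, hsplit]
  ring

set_option maxHeartbeats 1000000 in
lemma tendsto_Fanti : Tendsto Fanti atTop (𝓝 (-3 * (15:ℝ) ^ ((7:ℝ)/2) / 350)) := by
  have hG : ContinuousAt (fun u : ℝ => (u + 1/15) ^ (-(7:ℝ)/2) * (3*u/10 - 3/350)) 0 := by
    apply ContinuousAt.mul
    · apply ContinuousAt.rpow_const (by fun_prop)
      left; norm_num
    · fun_prop
  have hu : Tendsto (fun r : ℝ => (r^2)⁻¹) atTop (𝓝 0) :=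
    (tendsto_pow_atTop (two_ne_zero)).inv_tendsto_atTop
  have hcomp := (hG.tendsto.comp hu)
  have hval : (fun u : ℝ => (u + 1/15) ^ (-(7:ℝ)/2) * (3*u/10 - 3/350)) 0
      = -3 * (15:ℝ) ^ ((7:ℝ)/2) / 350 := by
    simp only [zero_add, mul_zero, zero_div]
    rw [show ((1:ℝ)/15) = (15:ℝ)^(-(1:ℝ)) by rw [Real.rpow_neg_one]; norm_num,
      ← Real.rpow_mul (by norm_num : (0:ℝ) ≤ 15)]
    norm_num
    ring
  rw [← hval]
  apply hcomp.congr'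
  filter_upwards [eventually_ge_atTop (1:ℝ)] with r hr
  have hr0 : (0:ℝ) < r := by linarith
  have key : (1 + r^2/15) = r^2 * ((r^2)⁻¹ + 1/15) := by
    field_simp
  have h2 : (1 + r^2/15) ^ (-(7:ℝ)/2)
      = (r^2) ^ (-(7:ℝ)/2) * ((r^2)⁻¹ + 1/15) ^ (-(7:ℝ)/2) := by
    rw [key, Real.mul_rpow (by positivity) (by positivity)]
  have e1 : ((r^2:ℝ)) ^ (-(7:ℝ)/2) = (r^(7:ℕ))⁻¹ := by
    rw [← Real.rpow_natCast r 2, ← Real.rpow_mul hr0.le]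
    rw [show (((2:ℕ):ℝ) * (-(7:ℝ)/2)) = -((7:ℕ):ℝ) by norm_num, Real.rpow_neg hr0.le,
      Real.rpow_natCast]
  show (((r^2)⁻¹ + 1/15) ^ (-(7:ℝ)/2) * (3*(r^2)⁻¹/10 - 3/350)) = Fanti r
  rw [Fanti, h2, e1]
  have hrne : r ≠ 0 := hr0.ne'
  field_simp

lemma integrableOn_1d : IntegrableOn (fun r : ℝ => r^4 * f1 r) (Set.Ioi (0:ℝ)) := by
  have hjb : Integrable (fun r : ℝ => (1 + ‖r‖) ^ (-(2:ℝ))) := by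
    apply integrable_one_add_norm (E := ℝ)
    simp
  refine ((hjb.const_mul 20250).mono' ?_ ?_).integrableOn
  · exact ((continuous_pow 4).mul cont_f1).aestronglyMeasurable
  filter_upwards with r
  have hA : (0:ℝ) < 1 + r^2/15 := base_pos _ (sq_nonneg r)
  have hB : (0:ℝ) < 1 + ‖r‖ := by positivity
  have h1 : |3/2 - r^2/10| ≤ 3 * (1 + r^2/15) := by
    rw [abs_le]; constructor <;> nlinarith
  have h2 : r^4 ≤ 225 * (1 + r^2/15)^2 := by nlinarith [sq_nonneg r, sq_nonneg (r^2)]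
  have h3 : ((1 + r^2/15):ℝ)^(3:ℕ) * (1 + r^2/15) ^ (-(9:ℝ)/2)
      = (1 + r^2/15) ^ (-(3:ℝ)/2) := by
    rw [← Real.rpow_natCast (1 + r^2/15) 3, ← Real.rpow_add hA]; norm_num
  have h4 : (1 + r^2/15) ^ (-(3:ℝ)/2) ≤ (1 + r^2/15) ^ (-(1:ℝ)) :=
    Real.rpow_le_rpow_of_exponent_le (by nlinarith) (by norm_num)
  have h5 : (1 + r^2/15) ^ (-(1:ℝ)) ≤ 30 * (1 + ‖r‖) ^ (-(2:ℝ)) := by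
    rw [Real.rpow_neg_one, show (-(2:ℝ)) = -((2:ℕ):ℝ) by norm_num,
      Real.rpow_neg hB.le, Real.rpow_natCast,
      inv_le_iff_one_le_mul₀ hA]
    rw [show (30:ℝ) * ((1+‖r‖)^2)⁻¹ * (1 + r^2/15) = (30 * (1 + r^2/15)) / (1+‖r‖)^2 by ring,
      le_div_iff₀ (by positivity), one_mul]
    have hnr : ‖r‖^2 = r^2 := by rw [Real.norm_eq_abs, sq_abs]
    nlinarith [norm_nonneg r, sq_nonneg (‖r‖ - 1)]
  have hpos9 : (0:ℝ) < (1 + r^2/15) ^ (-(9:ℝ)/2) := Real.rpow_pos_of_pos hA _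
  calc ‖r^4 * f1 r‖ = r^4 * |3/2 - r^2/10| * (1 + r^2/15) ^ (-(9:ℝ)/2) := by
        rw [norm_mul, norm_pow, Real.norm_eq_abs, Real.norm_eq_abs,
          show |r|^4 = r^4 by rw [← abs_pow]; exact abs_of_nonneg (by positivity), f1,
          abs_mul, abs_of_pos hpos9]
        ring
    _ ≤ (225 * (1 + r^2/15)^2) * (3 * (1 + r^2/15)) * (1 + r^2/15) ^ (-(9:ℝ)/2) := by
        apply mul_le_mul_of_nonneg_right _ hpos9.le
        exact mul_le_mul h2 h1 (abs_nonneg _) (by positivity)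
    _ = 675 * (((1 + r^2/15):ℝ)^(3:ℕ) * (1 + r^2/15) ^ (-(9:ℝ)/2)) := by ring
    _ = 675 * (1 + r^2/15) ^ (-(3:ℝ)/2) := by rw [h3]
    _ ≤ 675 * (30 * (1 + ‖r‖) ^ (-(2:ℝ))) := by nlinarith [h4.trans h5]
    _ = 20250 * (1 + ‖r‖) ^ (-(2:ℝ)) := by ring

lemma integral_1d : ∫ r in Set.Ioi (0:ℝ), r^4 * f1 r = -3 * (15:ℝ) ^ ((7:ℝ)/2) / 350 := by
  have h := integral_Ioi_of_hasDerivAt_of_tendsto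
    (f := Fanti) (f' := fun r => r^4 * f1 r) (a := 0)
    ?_ (fun x _ => hasDerivAt_Fanti x) integrableOn_1d tendsto_Fanti
  · rw [h]; simp [Fanti]
  · exact (hasDerivAt_Fanti 0).continuousAt.continuousWithinAt

lemma integrand1_eq (x : E5) : Wfun x ^ ((4:ℝ)/3) * LamW x = f1 ‖x‖ := by
  have hA : (0:ℝ) < 1 + ‖x‖^2/15 := base_pos _ (sq_nonneg _)
  rw [LamW_eq, Wfun, f1, ← Real.rpow_mul hA.le, mul_comm ((3/2 - ‖x‖^2/10)),
    ← mul_assoc, ← Real.rpow_add hA]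
  norm_num
  ring

lemma integrand2_eq (x : E5) : (LamW x)^2 = f2 ‖x‖ := by
  have hA : (0:ℝ) < 1 + ‖x‖^2/15 := base_pos _ (sq_nonneg _)
  rw [LamW_eq, f2, mul_pow, ← Real.rpow_natCast ((1 + ‖x‖^2/15) ^ (-(5:ℝ)/2)) 2,
    ← Real.rpow_mul hA.le]
  norm_num

lemma integral_I :
    (∫ x : E5, Wfun x ^ ((4 : ℝ) / 3) * LamW x)
      = (5 * (volume (Metric.ball (0:E5) 1)).toReal) * (-3 * (15:ℝ) ^ ((7:ℝ)/2) / 350) := by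
  have hfun : (fun x : E5 => Wfun x ^ ((4:ℝ)/3) * LamW x) = fun x => f1 ‖x‖ :=
    funext integrand1_eq
  rw [hfun]
  have hpolar := MeasureTheory.integral_fun_norm_addHaar (volume : Measure E5) f1
  simp only [finrank_euclideanSpace, Fintype.card_fin] at hpolar
  rw [hpolar]
  have : (∫ y in Set.Ioi (0:ℝ), y ^ (5-1) • f1 y) = -3 * (15:ℝ) ^ ((7:ℝ)/2) / 350 := by
    rw [← integral_1d]
    apply setIntegral_congr_fun measurableSet_Ioi
    intro y _
    simp [smul_eq_mul]
  rw [this]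
  simp only [nsmul_eq_mul, smul_eq_mul]
  push_cast
  simp only [Measure.real]
  ring

/-- `∫ W^{4/3} ΛW` is finite and strictly negative; hence `κ_ℓ > 0` for `|ℓ| < 1`. -/
theorem kappa_positive :
    Integrable (fun x : E5 => Wfun x ^ ((4 : ℝ) / 3) * LamW x) ∧
    (∫ x : E5, Wfun x ^ ((4 : ℝ) / 3) * LamW x) < 0 ∧
    ∀ l : E5, ‖l‖ < 1 → 0 < kappal l := by
  have hfun1 : (fun x : E5 => Wfun x ^ ((4:ℝ)/3) * LamW x) = fun x => f1 ‖x‖ :=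
    funext integrand1_eq
  have hfun2 : (fun x : E5 => (LamW x)^2) = fun x => f2 ‖x‖ := funext integrand2_eq
  have hInt1 : Integrable (fun x : E5 => Wfun x ^ ((4:ℝ)/3) * LamW x) := by
    rw [hfun1]; exact int1
  have hball : (0:ℝ) < (volume (Metric.ball (0:E5) 1)).toReal :=
    ENNReal.toReal_pos (Metric.measure_ball_pos volume 0 one_pos).ne' measure_ball_lt_top.ne
  have hI : (∫ x : E5, Wfun x ^ ((4:ℝ)/3) * LamW x) < 0 := by
    rw [integral_I]
    have h15 : (0:ℝ) < (15:ℝ) ^ ((7:ℝ)/2) := Real.rpow_pos_of_pos (by norm_num) _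
    have : (-3 * (15:ℝ) ^ ((7:ℝ)/2) / 350) < 0 := by nlinarith
    exact mul_neg_of_pos_of_neg (by positivity) this
  have hJ : 0 < (∫ x : E5, (LamW x)^2) := by
    have hInt2 : Integrable (fun x : E5 => (LamW x)^2) := by rw [hfun2]; exact int2
    refine (integral_pos_iff_support_of_nonneg (fun x => sq_nonneg _) hInt2).mpr ?_
    refine lt_of_lt_of_le (Metric.measure_ball_pos volume (0:E5) one_pos) (measure_mono ?_)
    intro x hx
    simp only [Metric.mem_ball, dist_zero_right] at hx
    have hA : (0:ℝ) < 1 + ‖x‖^2/15 := base_pos _ (sq_nonneg _)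
    have hn : 0 ≤ ‖x‖ := norm_nonneg x
    have : (LamW x)^2 > 0 := by
      rw [integrand2_eq, f2]
      have h1 : (0:ℝ) < 3/2 - ‖x‖^2/10 := by nlinarith
      positivity
    simpa [Function.mem_support] using this.ne'
  refine ⟨hInt1, hI, fun l hl => ?_⟩
  have hl2 : ‖l‖^2 < 1 := by nlinarith [norm_nonneg l]
  rw [kappal]
  apply div_pos _ hJ
  have : 0 < (1 - ‖l‖^2) := by linarith
  nlinarith
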